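/- arXiv:2109.06941 — 7 statements merged into one kernel-verified Lean document; each statement's English description precedes it below -/
import Mathlib

section
/- The inner product function IP_m(x,y) = Σᵢ xᵢyᵢ mod 2 on {0,1}^m × {0,1}^m has discrepancy at most 2^{-Ω(m)} under the uniform distribution: for every combinatorial rectangle R = A × B with A, B ⊆ {0,1}^m, |Pr[(x,y)∈R and IP_m(x,y)=0] − Pr[(x,y)∈R and IP_m(x,y)=1]| ≤ 2^{-m/2} where (x,y) is uniform. -/
open Finset

/-- The inner product function `IP_m(x,y) = Σ xᵢyᵢ mod 2`. -/
def IPfun (m : ℕ) (x y : Fin m → Bool) : Bool :=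
  decide (Odd ((Finset.univ.filter fun i => x i = true ∧ y i = true)).card)

/-- The sign character `(-1)^{⟨x,y⟩}`. -/
def chiIP (m : ℕ) (x y : Fin m → Bool) : ℝ :=
  (-1 : ℝ) ^ ((Finset.univ.filter fun i => x i = true ∧ y i = true)).card

lemma chiIP_eq_prod (m : ℕ) (x y : Fin m → Bool) :
    chiIP m x y = ∏ i : Fin m, (-1 : ℝ) ^ (if x i = true ∧ y i = true then 1 else 0) := by
  rw [chiIP, Finset.card_filter, ← Finset.prod_pow_eq_pow_sum]

lemma chiIP_val (m : ℕ) (x y : Fin m → Bool) :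
    chiIP m x y = if IPfun m x y = true then -1 else 1 := by
  rw [chiIP, IPfun]
  by_cases h : Odd ((Finset.univ.filter fun i => x i = true ∧ y i = true)).card
  · simp [h, h.neg_one_pow]
  · simp [h, (Nat.not_odd_iff_even.mp h).neg_one_pow]

lemma chiIP_orth (m : ℕ) (y y' : Fin m → Bool) :
    ∑ x : Fin m → Bool, chiIP m x y * chiIP m x y'
      = if y = y' then (2 : ℝ) ^ m else 0 := by
  have h : ∀ x : Fin m → Bool, chiIP m x y * chiIP m x y'
      = ∏ i : Fin m, ((-1 : ℝ) ^ (if x i = true ∧ y i = true then 1 else 0)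
          * (-1 : ℝ) ^ (if x i = true ∧ y' i = true then 1 else 0)) := by
    intro x; rw [chiIP_eq_prod, chiIP_eq_prod, ← Finset.prod_mul_distrib]
  simp only [h]
  have key := Finset.prod_univ_sum (fun _ : Fin m => (Finset.univ : Finset Bool))
    (fun i b => ((-1 : ℝ) ^ (if b = true ∧ y i = true then 1 else 0)
          * (-1 : ℝ) ^ (if b = true ∧ y' i = true then 1 else 0)))
  rw [Fintype.piFinset_univ] at key
  rw [← key]
  have hfac : ∀ i : Fin m,
      (∑ b : Bool, ((-1 : ℝ) ^ (if b = true ∧ y i = true then 1 else 0)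
          * (-1 : ℝ) ^ (if b = true ∧ y' i = true then 1 else 0)))
        = if y i = y' i then 2 else 0 := by
    intro i
    cases hy : y i <;> cases hy' : y' i <;> simp [Fintype.sum_bool] <;> norm_num
  rw [Finset.prod_congr rfl (fun i _ => hfac i)]
  by_cases hyy : y = y'
  · subst hyy
    simp
  · obtain ⟨i, hi⟩ : ∃ i, y i ≠ y' i := Function.ne_iff.mp hyy
    rw [if_neg hyy]
    exact Finset.prod_eq_zero (Finset.mem_univ i) (if_neg hi)

/-- **Discrepancy of inner product.** For every combinatorial rectangle `A × B`,
`|Pr[(x,y) ∈ A×B ∧ IP = 0] − Pr[(x,y) ∈ A×B ∧ IP = 1]| ≤ 2^{-m/2}` under the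
uniform distribution on `{0,1}^m × {0,1}^m`. -/
theorem inner_product_discrepancy (m : ℕ) (A B : Finset (Fin m → Bool)) :
    |((((A ×ˢ B).filter (fun p => IPfun m p.1 p.2 = false)).card : ℝ)
          / ((2 : ℝ) ^ m * 2 ^ m)
        - (((A ×ˢ B).filter (fun p => IPfun m p.1 p.2 = true)).card : ℝ)
          / ((2 : ℝ) ^ m * 2 ^ m))|
      ≤ (2 : ℝ) ^ (-(m : ℝ) / 2) := by
  set S : ℝ := ∑ p ∈ A ×ˢ B, chiIP m p.1 p.2 with hS
  -- S equals card(false side) - card(true side)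
  have hsplit : S = (((A ×ˢ B).filter (fun p => IPfun m p.1 p.2 = false)).card : ℝ)
      - (((A ×ˢ B).filter (fun p => IPfun m p.1 p.2 = true)).card : ℝ) := by
    rw [hS, ← Finset.sum_filter_add_sum_filter_not (A ×ˢ B)
      (fun p => IPfun m p.1 p.2 = false)]
    have h1 : ∀ p ∈ (A ×ˢ B).filter (fun p => IPfun m p.1 p.2 = false),
        chiIP m p.1 p.2 = 1 := by
      intro p hp
      rw [chiIP_val, if_neg]
      simp only [Finset.mem_filter] at hp
      simp [hp.2]
    have h2 : ∀ p ∈ (A ×ˢ B).filter (fun p => ¬ IPfun m p.1 p.2 = false),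
        chiIP m p.1 p.2 = -1 := by
      intro p hp
      rw [chiIP_val, if_pos]
      simp only [Finset.mem_filter] at hp
      simpa using hp.2
    rw [Finset.sum_congr rfl h1, Finset.sum_congr rfl h2]
    have heq : (A ×ˢ B).filter (fun p => ¬ IPfun m p.1 p.2 = false)
        = (A ×ˢ B).filter (fun p => IPfun m p.1 p.2 = true) := by
      apply Finset.filter_congr; intro p _; simp
    rw [heq, Finset.sum_const, Finset.sum_const]
    simp
    ring
  -- the row sums
  set g : (Fin m → Bool) → ℝ := fun x => ∑ y ∈ B, chiIP m x y with hg
  have hSg : S = ∑ x ∈ A, g x := by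
    rw [hS, Finset.sum_product]
  -- total square sum
  have hsq : ∑ x : Fin m → Bool, (g x) ^ 2 = (2 : ℝ) ^ m * B.card := by
    have h1 : ∀ x : Fin m → Bool, (g x) ^ 2
        = ∑ y ∈ B, ∑ y' ∈ B, chiIP m x y * chiIP m x y' := by
      intro x
      rw [hg, sq, Finset.sum_mul_sum]
    calc ∑ x : Fin m → Bool, (g x)^2
        = ∑ x : Fin m → Bool, ∑ y ∈ B, ∑ y' ∈ B, chiIP m x y * chiIP m x y' :=
          Finset.sum_congr rfl fun x _ => h1 x
      _ = ∑ y ∈ B, ∑ x : Fin m → Bool, ∑ y' ∈ B, chiIP m x y * chiIP m x y' :=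
          Finset.sum_comm
      _ = ∑ y ∈ B, ∑ y' ∈ B, ∑ x : Fin m → Bool, chiIP m x y * chiIP m x y' :=
          Finset.sum_congr rfl fun y _ => Finset.sum_comm
      _ = ∑ y ∈ B, ∑ y' ∈ B, (if y = y' then (2:ℝ)^m else 0) := by
          simp only [chiIP_orth]
      _ = ∑ _y ∈ B, (2:ℝ)^m := Finset.sum_congr rfl fun y hy => by
          rw [Finset.sum_ite_eq B y (fun _ => (2:ℝ)^m), if_pos hy]
      _ = (2:ℝ)^m * B.card := by rw [Finset.sum_const, nsmul_eq_mul, mul_comm]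
  -- cardinality bounds
  have hcardA : (A.card : ℝ) ≤ 2 ^ m := by
    have h := (Finset.card_le_univ A).trans_eq Finset.card_univ
    have hu : Fintype.card (Fin m → Bool) = 2 ^ m := by simp
    rw [hu] at h
    exact_mod_cast h
  have hcardB : (B.card : ℝ) ≤ 2 ^ m := by
    have h := (Finset.card_le_univ B).trans_eq Finset.card_univ
    have hu : Fintype.card (Fin m → Bool) = 2 ^ m := by simp
    rw [hu] at h
    exact_mod_cast h
  -- Cauchy-Schwarz
  have hCS : S ^ 2 ≤ (A.card : ℝ) * ((2:ℝ)^m * B.card) := by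
    have h1 : S ^ 2 ≤ (∑ _x ∈ A, (1:ℝ)^2) * (∑ x ∈ A, (g x)^2) := by
      rw [hSg]
      have := Finset.sum_mul_sq_le_sq_mul_sq A (fun _ => (1:ℝ)) g
      simpa using this
    have h2 : ∑ x ∈ A, (g x)^2 ≤ ∑ x : Fin m → Bool, (g x)^2 :=
      Finset.sum_le_sum_of_subset_of_nonneg (Finset.subset_univ A)
        (fun i _ _ => sq_nonneg _)
    calc S ^ 2 ≤ (∑ _x ∈ A, (1:ℝ)^2) * (∑ x ∈ A, (g x)^2) := h1
      _ = (A.card : ℝ) * (∑ x ∈ A, (g x)^2) := by simp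
      _ ≤ (A.card : ℝ) * ((2:ℝ)^m * B.card) := by
          rw [← hsq]
          exact mul_le_mul_of_nonneg_left h2 (by positivity)
  have hS2 : S ^ 2 ≤ (2:ℝ) ^ m * ((2:ℝ)^m * (2:ℝ)^m) := by
    calc S ^ 2 ≤ (A.card : ℝ) * ((2:ℝ)^m * B.card) := hCS
      _ ≤ (2:ℝ)^m * ((2:ℝ)^m * (2:ℝ)^m) := by
          apply mul_le_mul hcardA _ (by positivity) (by positivity)
          exact mul_le_mul_of_nonneg_left hcardB (by positivity)
  -- conclude
  have hpow : ((2:ℝ)^m : ℝ) = (2:ℝ) ^ (m : ℝ) := (Real.rpow_natCast 2 m).symm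
  have habs : |S| ≤ (2:ℝ) ^ ((3 * (m:ℝ)) / 2) := by
    have h1 : |S| = Real.sqrt (S ^ 2) := (Real.sqrt_sq_eq_abs S).symm
    rw [h1]
    have h2 : Real.sqrt (S^2) ≤ Real.sqrt ((2:ℝ) ^ m * ((2:ℝ)^m * (2:ℝ)^m)) :=
      Real.sqrt_le_sqrt hS2
    refine h2.trans_eq ?_
    rw [hpow, ← Real.rpow_add (by norm_num), ← Real.rpow_add (by norm_num),
      Real.sqrt_eq_rpow, ← Real.rpow_mul (by norm_num)]
    ring_nf
  have hD : (0:ℝ) < (2 : ℝ) ^ m * 2 ^ m := by positivity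
  rw [div_sub_div_same, abs_div, abs_of_pos hD, div_le_iff₀ hD]
  have hfin : |S| ≤ (2:ℝ) ^ (-(m:ℝ)/2) * ((2:ℝ)^m * (2:ℝ)^m) := by
    refine habs.trans_eq ?_
    rw [hpow, ← Real.rpow_add (by norm_num), ← Real.rpow_add (by norm_num)]
    ring_nf
  rw [hsplit] at hfin
  exact hfin
end

section
/- Let a and b be monotone polynomials. Then the product a·b can be written as a·b = Σ_{i,j} λ_{i,j} · α_i·β_j, where each α_i and β_j has only 0/1 coefficients, all λ_{i,j} > 0, and Σ_{i,j} λ_{i,j} = ‖a·b‖_∞ (= ‖a‖_∞·‖b‖_∞). -/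
open Finset

lemma decomp_aux {σ : Type*} [Fintype σ] [Nonempty σ] :
    ∀ n (a : σ → ℝ), (∀ s, 0 ≤ a s) →
    ((Finset.univ.image a).filter (fun v => 0 < v)).card ≤ n →
    ∃ (k : ℕ) (μ : Fin k → ℝ) (α : Fin k → σ → ℝ),
      (∀ i s, α i s = 0 ∨ α i s = 1) ∧ (∀ i, 0 < μ i) ∧
      (∀ s, a s = ∑ i, μ i * α i s) ∧
      (∑ i, μ i = Finset.univ.sup' Finset.univ_nonempty a) := by
  intro n
  induction n with
  | zero =>
    intro a ha hcard
    have hP : ((Finset.univ.image a).filter (fun v => 0 < v)) = ∅ :=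
      Finset.card_eq_zero.mp (le_antisymm hcard (Nat.zero_le _))
    have hz : ∀ s, a s = 0 := by
      intro s
      by_contra h
      have h1 : 0 < a s := lt_of_le_of_ne (ha s) (Ne.symm h)
      have : a s ∈ (Finset.univ.image a).filter (fun v => 0 < v) :=
        mem_filter.mpr ⟨mem_image_of_mem a (mem_univ s), h1⟩
      simp [hP] at this
    refine ⟨0, Fin.elim0, Fin.elim0, fun i => i.elim0, fun i => i.elim0, ?_, ?_⟩
    · intro s; simp [hz s]
    · have : Finset.univ.sup' Finset.univ_nonempty a = 0 :=
        le_antisymm (Finset.sup'_le _ _ fun s _ => (hz s).le)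
          ((hz (Classical.arbitrary σ)) ▸ Finset.le_sup' a (mem_univ _))
      simp [this]
  | succ n ih =>
    intro a ha hcard
    by_cases hP : ((Finset.univ.image a).filter (fun v => 0 < v)) = ∅
    · exact ih a ha (by simp [hP])
    · set P := (Finset.univ.image a).filter (fun v => 0 < v) with hPdef
      have hPne : P.Nonempty := nonempty_iff_ne_empty.mpr hP
      set m := P.min' hPne with hm
      have hmP : m ∈ P := P.min'_mem hPne
      have hmpos : 0 < m := (mem_filter.mp hmP).2
      have hmin : ∀ v ∈ P, m ≤ v := fun v hv => P.min'_le v hv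
      -- any positive value of a is ≥ m
      have hge : ∀ s, 0 < a s → m ≤ a s := by
        intro s hs
        exact hmin _ (mem_filter.mpr ⟨mem_image_of_mem a (mem_univ s), hs⟩)
      set χ : σ → ℝ := fun s => if m ≤ a s then 1 else 0 with hχ
      set a' : σ → ℝ := fun s => if m ≤ a s then a s - m else a s with ha'
      have ha'nonneg : ∀ s, 0 ≤ a' s := by
        intro s; simp only [ha']
        split
        · linarith
        · exact ha s
      have hsplit : ∀ s, a s = m * χ s + a' s := by
        intro s; simp only [hχ, ha']
        split <;> ring
      have hzero : ∀ s, ¬ m ≤ a s → a s = 0 := by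
        intro s hs
        rcases eq_or_lt_of_le (ha s) with h | h
        · exact h.symm
        · exact absurd (hge s h) hs
      -- the positive values of a' are contained in (P.erase m).image (· - m)
      have hsub : ((Finset.univ.image a').filter (fun v => 0 < v)) ⊆
          (P.erase m).image (fun v => v - m) := by
        intro v hv
        obtain ⟨hv1, hv2⟩ := mem_filter.mp hv
        obtain ⟨s, _, hs⟩ := mem_image.mp hv1
        by_cases hms : m ≤ a s
        · have hasv : a' s = a s - m := by simp [ha', hms]
          have hpos : m < a s := by
            rcases eq_or_lt_of_le hms with h | h
            · exfalso; rw [← hs] at hv2; rw [hasv, ← h] at hv2; linarith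
            · exact h
          refine mem_image.mpr ⟨a s, ?_, by rw [← hs, hasv]⟩
          exact mem_erase.mpr ⟨ne_of_gt hpos,
            mem_filter.mpr ⟨mem_image_of_mem a (mem_univ s), by linarith⟩⟩
        · exfalso
          have : a' s = a s := by simp [ha', hms]
          rw [← hs, this, hzero s hms] at hv2
          exact lt_irrefl 0 hv2
      have hcard' : ((Finset.univ.image a').filter (fun v => 0 < v)).card ≤ n := by
        calc ((Finset.univ.image a').filter (fun v => 0 < v)).card
            ≤ ((P.erase m).image (fun v => v - m)).card := Finset.card_le_card hsub
          _ ≤ (P.erase m).card := Finset.card_image_le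
          _ = P.card - 1 := Finset.card_erase_of_mem hmP
          _ ≤ n := by omega
      obtain ⟨k, μ, α, hα01, hμpos, hsum, hμtot⟩ := ih a' ha'nonneg hcard'
      -- sup' a' = sup' a - m
      set M := Finset.univ.sup' Finset.univ_nonempty a with hM
      obtain ⟨s₀, _, hs₀⟩ := Finset.exists_mem_eq_sup' Finset.univ_nonempty a
      have hmM : m ≤ M := by
        obtain ⟨s₁, _, hs₁⟩ := mem_image.mp (mem_filter.mp hmP).1
        rw [← hs₁]; exact Finset.le_sup' a (mem_univ s₁)
      have hsup' : Finset.univ.sup' Finset.univ_nonempty a' = M - m := by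
        apply le_antisymm
        · apply Finset.sup'_le
          intro s _
          by_cases hms : m ≤ a s
          · simp only [ha', if_pos hms]
            have : a s ≤ M := Finset.le_sup' a (mem_univ s)
            linarith
          · simp only [ha', if_neg hms]
            rw [hzero s hms]; linarith
        · have hms₀ : m ≤ a s₀ := by rw [← hs₀]; exact hmM
          have : a' s₀ = M - m := by
            show (if m ≤ a s₀ then a s₀ - m else a s₀) = M - m
            rw [if_pos hms₀, hM, hs₀]
          rw [← this]; exact Finset.le_sup' a' (mem_univ s₀)
      refine ⟨k + 1, Fin.cons m μ, Fin.cons χ α, ?_, ?_, ?_, ?_⟩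
      · intro i s
        refine Fin.cases ?_ ?_ i
        · simp only [Fin.cons_zero, hχ]
          split <;> simp
        · intro j; simpa using hα01 j s
      · intro i
        refine Fin.cases ?_ ?_ i
        · simpa using hmpos
        · intro j; simpa using hμpos j
      · intro s
        rw [Fin.sum_univ_succ]
        simp only [Fin.cons_zero, Fin.cons_succ]
        rw [← hsum s]
        exact hsplit s
      · rw [Fin.sum_univ_succ]
        simp only [Fin.cons_zero, Fin.cons_succ]
        rw [hμtot, hsup']
        ring

lemma decomp_1d {σ : Type*} [Fintype σ] [Nonempty σ] (a : σ → ℝ) (ha : ∀ s, 0 ≤ a s) :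
    ∃ (k : ℕ) (μ : Fin k → ℝ) (α : Fin k → σ → ℝ),
      (∀ i s, α i s = 0 ∨ α i s = 1) ∧ (∀ i, 0 < μ i) ∧
      (∀ s, a s = ∑ i, μ i * α i s) ∧
      (∑ i, μ i = Finset.univ.sup' Finset.univ_nonempty a) :=
  decomp_aux _ a ha le_rfl

/-- **Rectangular decomposition of a product of monotone polynomials.**
The monomials of `a` (resp. `b`) are indexed by `σ` (resp. `τ`), and the coefficient of the
monomial of `a·b` indexed by `(s,t)` is `a s * b t` (the variable supports are disjoint).
Then `a·b = Σ_{i,j} λ_{i,j} α_i·β_j` where `α_i, β_j` have 0/1 coefficients, `λ_{i,j} > 0`,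
and `Σ_{i,j} λ_{i,j} = ‖a·b‖_∞ = ‖a‖_∞·‖b‖_∞`. -/
theorem monotone_product_rectangular_decomposition
    (σ τ : Type*) [Fintype σ] [Fintype τ] [Nonempty σ] [Nonempty τ]
    (a : σ → ℝ) (b : τ → ℝ)
    (ha : ∀ s, 0 ≤ a s) (hb : ∀ t, 0 ≤ b t) :
    ∃ (k l : ℕ) (lam : Fin k → Fin l → ℝ)
      (α : Fin k → σ → ℝ) (β : Fin l → τ → ℝ),
      (∀ i s, α i s = 0 ∨ α i s = 1) ∧
      (∀ j t, β j t = 0 ∨ β j t = 1) ∧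
      (∀ i j, 0 < lam i j) ∧
      (∀ s t, a s * b t = ∑ i, ∑ j, lam i j * (α i s * β j t)) ∧
      (∑ i, ∑ j, lam i j
          = (Finset.univ.sup' Finset.univ_nonempty fun p : σ × τ => a p.1 * b p.2)) ∧
      (Finset.univ.sup' Finset.univ_nonempty fun p : σ × τ => a p.1 * b p.2)
          = (Finset.univ.sup' Finset.univ_nonempty a)
            * (Finset.univ.sup' Finset.univ_nonempty b) := by
  obtain ⟨k, μa, α, hα01, hμa, hsa, hta⟩ := decomp_1d a ha
  obtain ⟨l, μb, β, hβ01, hμb, hsb, htb⟩ := decomp_1d b hb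
  set Ma := Finset.univ.sup' Finset.univ_nonempty a with hMa
  set Mb := Finset.univ.sup' Finset.univ_nonempty b with hMb
  have hMa0 : 0 ≤ Ma := le_trans (ha (Classical.arbitrary σ)) (Finset.le_sup' a (mem_univ _))
  have hsupprod :
      (Finset.univ.sup' Finset.univ_nonempty fun p : σ × τ => a p.1 * b p.2) = Ma * Mb := by
    apply le_antisymm
    · apply Finset.sup'_le
      rintro ⟨s, t⟩ _
      exact mul_le_mul (Finset.le_sup' a (mem_univ s)) (Finset.le_sup' b (mem_univ t))
        (hb t) hMa0
    · obtain ⟨s₀, _, hs₀⟩ := Finset.exists_mem_eq_sup' (Finset.univ_nonempty (α := σ)) a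
      obtain ⟨t₀, _, ht₀⟩ := Finset.exists_mem_eq_sup' (Finset.univ_nonempty (α := τ)) b
      have : Ma * Mb = a s₀ * b t₀ := by rw [hMa, hMb, hs₀, ht₀]
      rw [this]
      exact Finset.le_sup' (fun p : σ × τ => a p.1 * b p.2) (mem_univ (s₀, t₀))
  refine ⟨k, l, fun i j => μa i * μb j, α, β, hα01, hβ01,
    fun i j => mul_pos (hμa i) (hμb j), ?_, ?_, hsupprod⟩
  · intro s t
    rw [hsa s, hsb t, Finset.sum_mul_sum]
    apply Finset.sum_congr rfl
    intro i _
    apply Finset.sum_congr rfl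
    intro j _
    ring
  · rw [hsupprod, ← hta, ← htb, ← Finset.sum_mul_sum]
end

section
/- Let Δ be a probability distribution on the set of set-multilinear monomials [m]^n, f a set-multilinear polynomial with 0/1 coefficients, and M the signed measure assigning Δ(κ) to monomials κ with coefficient 1 in f and −Δ(κ) to monomials with coefficient 0 (and 0 outside the support of Δ), extended linearly to polynomials. Then for any nearly-balanced ordered product polynomial a·b of degree n with all coefficients in [0,1], |M(a·b)| ≤ disc_Δ(C^f), where disc_Δ(C^f) is the maximum over nearly-balanced partitions P of [n] of the discrepancy of the communication matrix C_P^f under the distributions induced by Δ. -/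
open Finset

/-- Combine a map on `A` and a map on `Aᶜ` into a set-multilinear monomial `[n] → [m]`. -/
def combineMono {n m : ℕ} (A : Finset (Fin n))
    (τ : {i // i ∈ A} → Fin m) (θ : {i // i ∈ Aᶜ} → Fin m) : Fin n → Fin m :=
  fun i => if h : i ∈ A then τ ⟨i, h⟩ else θ ⟨i, Finset.mem_compl.mpr h⟩

/-- The signed measure `M` associated to a distribution `Δ` on monomials and a 0/1-coefficient
set-multilinear polynomial `fc`: `M(κ) = Δ(κ)` if `fc κ = 1` and `M(κ) = −Δ(κ)` if `fc κ = 0`. -/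
noncomputable def signedM {n m : ℕ} (Δ fc : (Fin n → Fin m) → ℝ) (κ : Fin n → Fin m) : ℝ :=
  if fc κ = 1 then Δ κ else -Δ κ

/-- Auxiliary: a `[0,1]`-weighted sum is bounded by the max subset-sum bound. -/
lemma weighted_sum_abs_le {X : Type*} [Fintype X] (c w : X → ℝ) (γ : ℝ)
    (hw0 : ∀ x, 0 ≤ w x) (hw1 : ∀ x, w x ≤ 1)
    (h : ∀ S : Finset X, |∑ x ∈ S, c x| ≤ γ) :
    |∑ x, w x * c x| ≤ γ := by
  classical
  rw [abs_le]
  have hsplit := (Finset.sum_filter_add_sum_filter_not Finset.univ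
    (fun x => 0 ≤ c x) (fun x => w x * c x)).symm
  constructor
  · have h1 : ∑ x ∈ Finset.univ.filter (fun x => ¬ 0 ≤ c x), c x
        ≤ ∑ x ∈ Finset.univ.filter (fun x => ¬ 0 ≤ c x), w x * c x := by
      apply Finset.sum_le_sum
      intro x hx
      have hcx : c x < 0 := by
        simp only [Finset.mem_filter] at hx
        exact lt_of_not_ge hx.2
      nlinarith [hw0 x, hw1 x]
    have h2 : (0:ℝ) ≤ ∑ x ∈ Finset.univ.filter (fun x => 0 ≤ c x), w x * c x := by
      apply Finset.sum_nonneg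
      intro x hx
      simp only [Finset.mem_filter] at hx
      exact mul_nonneg (hw0 x) hx.2
    have h3 := h (Finset.univ.filter (fun x => ¬ 0 ≤ c x))
    rw [abs_le] at h3
    linarith [hsplit]
  · have h1 : ∑ x ∈ Finset.univ.filter (fun x => 0 ≤ c x), w x * c x
        ≤ ∑ x ∈ Finset.univ.filter (fun x => 0 ≤ c x), c x := by
      apply Finset.sum_le_sum
      intro x hx
      simp only [Finset.mem_filter] at hx
      nlinarith [hw1 x, hx.2]
    have h2 : ∑ x ∈ Finset.univ.filter (fun x => ¬ 0 ≤ c x), w x * c x ≤ 0 := by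
      apply Finset.sum_nonpos
      intro x hx
      simp only [Finset.mem_filter] at hx
      have hcx : c x < 0 := lt_of_not_ge hx.2
      exact mul_nonpos_of_nonneg_of_nonpos (hw0 x) hcx.le
    have h3 := h (Finset.univ.filter (fun x => 0 ≤ c x))
    rw [abs_le] at h3
    linarith [hsplit]

/-- **Discrepancy bounds the measure of nearly-balanced products.** If `γ` bounds the
discrepancy of the communication matrix `C^f` under `Δ` over every nearly-balanced
partition and every rectangle, then for any nearly-balanced ordered product polynomial
`a·b` of degree `n` with coefficients in `[0,1]`, `|M(a·b)| ≤ γ`. -/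
theorem measure_of_product_le_discrepancy (n m : ℕ)
    (Δ : (Fin n → Fin m) → ℝ) (hΔ0 : ∀ κ, 0 ≤ Δ κ) (hΔ1 : ∑ κ, Δ κ = 1)
    (fc : (Fin n → Fin m) → ℝ) (hf : ∀ κ, fc κ = 0 ∨ fc κ = 1)
    (γ : ℝ)
    (hγ : ∀ (B : Finset (Fin n)), n ≤ 3 * B.card → 3 * B.card ≤ 2 * n →
      ∀ (R₁ : Finset ({i // i ∈ B} → Fin m)) (R₂ : Finset ({i // i ∈ Bᶜ} → Fin m)),
        |∑ τ ∈ R₁, ∑ θ ∈ R₂, signedM Δ fc (combineMono B τ θ)| ≤ γ)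
    (A : Finset (Fin n)) (hA1 : n ≤ 3 * A.card) (hA2 : 3 * A.card ≤ 2 * n)
    (a : ({i // i ∈ A} → Fin m) → ℝ) (b : ({i // i ∈ Aᶜ} → Fin m) → ℝ)
    (ha : ∀ τ, 0 ≤ a τ) (hb : ∀ θ, 0 ≤ b θ)
    (hab : ∀ τ θ, a τ * b θ ≤ 1) :
    |∑ τ, ∑ θ, a τ * b θ * signedM Δ fc (combineMono A τ θ)| ≤ γ := by
  classical
  have hγ0 : 0 ≤ γ := by
    have := hγ A hA1 hA2 ∅ ∅
    simpa using this
  by_cases hne : Nonempty ({i // i ∈ A} → Fin m)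
  · obtain ⟨τ₀, -, hτ₀⟩ := Finset.exists_max_image (Finset.univ : Finset ({i // i ∈ A} → Fin m))
      a (Finset.univ_nonempty)
    set α := a τ₀ with hαdef
    by_cases hα : α = 0
    · have hz : ∀ τ, a τ = 0 := fun τ =>
        le_antisymm (hα ▸ hτ₀ τ (Finset.mem_univ τ)) (ha τ)
      have : ∑ τ, ∑ θ, a τ * b θ * signedM Δ fc (combineMono A τ θ) = 0 := by
        apply Finset.sum_eq_zero; intro τ _
        apply Finset.sum_eq_zero; intro θ _
        rw [hz τ]; ring
      rw [this]; simpa using hγ0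
    · have hαpos : 0 < α := lt_of_le_of_ne (ha τ₀) (Ne.symm hα)
      have key : ∑ τ, ∑ θ, a τ * b θ * signedM Δ fc (combineMono A τ θ)
          = ∑ τ, (a τ / α) * (∑ θ, (α * b θ) * signedM Δ fc (combineMono A τ θ)) := by
        apply Finset.sum_congr rfl; intro τ _
        rw [Finset.mul_sum]
        apply Finset.sum_congr rfl; intro θ _
        field_simp
      rw [key]
      apply weighted_sum_abs_le
      · intro τ; exact div_nonneg (ha τ) hαpos.le
      · intro τ; exact div_le_one_of_le₀ (hτ₀ τ (Finset.mem_univ τ)) hαpos.le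
      · intro S
        have hswap : ∑ τ ∈ S, ∑ θ, (α * b θ) * signedM Δ fc (combineMono A τ θ)
            = ∑ θ, (α * b θ) * (∑ τ ∈ S, signedM Δ fc (combineMono A τ θ)) := by
          rw [Finset.sum_comm]
          apply Finset.sum_congr rfl; intro θ _
          rw [Finset.mul_sum]
        rw [hswap]
        apply weighted_sum_abs_le
        · intro θ; exact mul_nonneg hαpos.le (hb θ)
        · intro θ; exact hab τ₀ θ
        · intro T
          have := hγ A hA1 hA2 S T
          rw [Finset.sum_comm] at this
          exact this
  · have hIE : IsEmpty ({i // i ∈ A} → Fin m) := not_nonempty_iff.mp hne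
    rw [Finset.univ_eq_empty]
    simpa using hγ0
end

section
/- Let Δ, f, M, γ = disc_Δ(C^f) be as in the discrepancy setup, and let F_{n,m} = ∏_{i=1}^n (x_{i,1}+...+x_{i,m}) be the full set-multilinear polynomial. If g = F_{n,m} − ε·f with ε ≥ 6γ/(1−3γ), then |M(g)| ≥ ε/3. -/
open Finset

/-!
Taking the rectangle of all monomials for one nearly-balanced partition, the discrepancy
hypothesis gives `|M(F_{n,m})| ≤ γ`. Writing `p` for the `Δ`-mass of the monomials of `f`,
`M(F_{n,m}) = 2p - 1` and `M(g) = (2p - 1) - εp`; so `p ≥ (1 - γ)/2`, and then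
`-M(g) ≥ ε(1 - γ)/2 - γ ≥ ε/3` exactly when `ε ≥ 6γ/(1 - 3γ)`.
-/

section CombineMono

variable {n m : ℕ}

def combineMonoEquiv (A : Finset (Fin n)) :
    (({i // i ∈ A} → Fin m) × ({i // i ∈ Aᶜ} → Fin m)) ≃ (Fin n → Fin m) where
  toFun q := combineMono A q.1 q.2
  invFun κ := (fun i => κ i, fun i => κ i)
  left_inv := by
    rintro ⟨τ, θ⟩
    refine Prod.ext (funext fun i => ?_) (funext fun i => ?_)
    · exact dif_pos i.2
    · exact dif_neg (Finset.mem_compl.mp i.2)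
  right_inv κ := funext fun i => by
    simp only [combineMono]
    split <;> rfl

theorem sum_sum_combineMono {β : Type*} [AddCommMonoid β] (A : Finset (Fin n))
    (g : (Fin n → Fin m) → β) :
    ∑ τ : {i // i ∈ A} → Fin m, ∑ θ : {i // i ∈ Aᶜ} → Fin m, g (combineMono A τ θ) =
      ∑ κ, g κ := by
  rw [← Fintype.sum_prod_type']
  exact (combineMonoEquiv A).sum_comp g

end CombineMono

theorem Fin.exists_finset_nearly_balanced {n : ℕ} (hn : 2 ≤ n) :
    ∃ B : Finset (Fin n), n ≤ 3 * #B ∧ 3 * #B ≤ 2 * n := by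
  obtain ⟨B, -, hB⟩ := exists_subset_card_eq (s := (univ : Finset (Fin n)))
    (n := (n + 2) / 3) (by rw [card_univ, Fintype.card_fin]; omega)
  exact ⟨B, by omega, by omega⟩

section SignedMeasure

variable {n m : ℕ} {Δ fc : (Fin n → Fin m) → ℝ}

theorem mul_signedM_of_zero_or_one (hf : ∀ κ, fc κ = 0 ∨ fc κ = 1) (κ : Fin n → Fin m) :
    fc κ * signedM Δ fc κ = fc κ * Δ κ := by
  rcases hf κ with h | h <;> simp [signedM, h]

theorem signedM_eq_of_zero_or_one (hf : ∀ κ, fc κ = 0 ∨ fc κ = 1) (κ : Fin n → Fin m) :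
    signedM Δ fc κ = 2 * (fc κ * Δ κ) - Δ κ := by
  rcases hf κ with h | h <;> simp [signedM, h]
  ring

theorem sum_signedM_eq (hf : ∀ κ, fc κ = 0 ∨ fc κ = 1) (hΔ1 : ∑ κ, Δ κ = 1) :
    ∑ κ, signedM Δ fc κ = 2 * ∑ κ, fc κ * Δ κ - 1 := by
  simp only [signedM_eq_of_zero_or_one hf, sum_sub_distrib, ← mul_sum, hΔ1]

theorem sum_one_sub_mul_signedM_eq (hf : ∀ κ, fc κ = 0 ∨ fc κ = 1) (ε : ℝ) :
    ∑ κ, (1 - ε * fc κ) * signedM Δ fc κ =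
      ∑ κ, signedM Δ fc κ - ε * ∑ κ, fc κ * Δ κ := by
  simp only [sub_mul, one_mul, mul_assoc, mul_signedM_of_zero_or_one hf, sum_sub_distrib,
    ← mul_sum]

end SignedMeasure

theorem le_abs_sub_mul_of_abs_two_mul_sub_one_le {p γ ε : ℝ} (hp : |2 * p - 1| ≤ γ)
    (hγ : 3 * γ < 1) (hε : 6 * γ / (1 - 3 * γ) ≤ ε) :
    ε / 3 ≤ |(2 * p - 1) - ε * p| := by
  obtain ⟨hlo, hhi⟩ := abs_le.mp hp
  have hγ0 : 0 ≤ γ := (abs_nonneg _).trans hp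
  have hε' : 6 * γ ≤ ε * (1 - 3 * γ) := (div_le_iff₀ (by linarith)).mp hε
  have hε0 : 0 ≤ ε := (div_nonneg (by linarith) (by linarith)).trans hε
  have hεp : ε * ((1 - γ) / 2) ≤ ε * p := mul_le_mul_of_nonneg_left (by linarith) hε0
  calc ε / 3 ≤ -((2 * p - 1) - ε * p) := by linarith
    _ ≤ _ := neg_le_abs _

theorem measure_of_g_lower_bound_general (n m : ℕ) (hn : 2 ≤ n)
    (Δ : (Fin n → Fin m) → ℝ) (hΔ1 : ∑ κ, Δ κ = 1)
    (fc : (Fin n → Fin m) → ℝ) (hf : ∀ κ, fc κ = 0 ∨ fc κ = 1)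
    (γ : ℝ) (hγlt : 3 * γ < 1)
    (hγ : ∀ (B : Finset (Fin n)), n ≤ 3 * B.card → 3 * B.card ≤ 2 * n →
      ∀ (R₁ : Finset ({i // i ∈ B} → Fin m)) (R₂ : Finset ({i // i ∈ Bᶜ} → Fin m)),
        |∑ τ ∈ R₁, ∑ θ ∈ R₂, signedM Δ fc (combineMono B τ θ)| ≤ γ)
    (ε : ℝ) (hε : 6 * γ / (1 - 3 * γ) ≤ ε) :
    ε / 3 ≤ |∑ κ, (1 - ε * fc κ) * signedM Δ fc κ| := by
  obtain ⟨B, hB₁, hB₂⟩ := Fin.exists_finset_nearly_balanced hn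
  have hF : |∑ κ, signedM Δ fc κ| ≤ γ := by
    simpa only [sum_sum_combineMono] using hγ B hB₁ hB₂ univ univ
  rw [sum_signedM_eq hf hΔ1] at hF
  rw [sum_one_sub_mul_signedM_eq hf, sum_signedM_eq hf hΔ1]
  exact le_abs_sub_mul_of_abs_two_mul_sub_one_le hF hγlt hε

/-- **Lower bound on the measure of `g = F_{n,m} − ε·f`.** The coefficient of a monomial `κ`
in `g` is `1 − ε·fc κ`, so `M(g) = Σ_κ (1 − ε·fc κ)·M(κ)`. If `γ` bounds the discrepancy of
`C^f` under `Δ` over all nearly-balanced partitions and rectangles, and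
`ε ≥ 6γ/(1−3γ)`, then `|M(g)| ≥ ε/3`. -/
theorem measure_of_g_lower_bound (n m : ℕ) (hn : 2 ≤ n)
    (Δ : (Fin n → Fin m) → ℝ) (hΔ0 : ∀ κ, 0 ≤ Δ κ) (hΔ1 : ∑ κ, Δ κ = 1)
    (fc : (Fin n → Fin m) → ℝ) (hf : ∀ κ, fc κ = 0 ∨ fc κ = 1)
    (γ : ℝ) (hγlt : 3 * γ < 1)
    (hγ : ∀ (B : Finset (Fin n)), n ≤ 3 * B.card → 3 * B.card ≤ 2 * n →
      ∀ (R₁ : Finset ({i // i ∈ B} → Fin m)) (R₂ : Finset ({i // i ∈ Bᶜ} → Fin m)),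
        |∑ τ ∈ R₁, ∑ θ ∈ R₂, signedM Δ fc (combineMono B τ θ)| ≤ γ)
    (ε : ℝ) (hε : 6 * γ / (1 - 3 * γ) ≤ ε) :
    ε / 3 ≤ |∑ κ, (1 - ε * fc κ) * signedM Δ fc κ| :=
  measure_of_g_lower_bound_general n m hn Δ hΔ1 fc hf γ hγlt hγ ε hε
end

section
/- Suppose g = F_{n,m} − ε·f can be written as g = Σ_{t=1}^s a_t·b_t where each a_t·b_t is a nearly-balanced ordered product polynomial with a_t·b_t ≤ g coefficient-wise (in particular all coefficients in [0,1]). If γ = disc_Δ(C^f) and ε ≥ 6γ/(1−3γ), then s ≥ ε/(3γ). -/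
open Finset

lemma combineMono_restr1 {n m : ℕ} (A : Finset (Fin n))
    (τ : {i // i ∈ A} → Fin m) (θ : {i // i ∈ Aᶜ} → Fin m) :
    (fun i : {i // i ∈ A} => combineMono A τ θ i.1) = τ := by
  funext i; simp [combineMono, i.2]

lemma combineMono_restr2 {n m : ℕ} (A : Finset (Fin n))
    (τ : {i // i ∈ A} → Fin m) (θ : {i // i ∈ Aᶜ} → Fin m) :
    (fun i : {i // i ∈ Aᶜ} => combineMono A τ θ i.1) = θ := by
  funext i
  have h : i.1 ∉ A := Finset.mem_compl.mp i.2
  simp [combineMono, h]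

/-- The splitting equivalence. -/
def splitEquiv {n m : ℕ} (A : Finset (Fin n)) :
    ({i // i ∈ A} → Fin m) × ({i // i ∈ Aᶜ} → Fin m) ≃ (Fin n → Fin m) where
  toFun p := combineMono A p.1 p.2
  invFun κ := (fun i => κ i.1, fun i => κ i.1)
  left_inv p := by
    obtain ⟨τ, θ⟩ := p
    simp only [Prod.mk.injEq]
    exact ⟨combineMono_restr1 A τ θ, combineMono_restr2 A τ θ⟩
  right_inv κ := by
    funext i
    by_cases h : i ∈ A <;> simp [combineMono, h]

lemma sum_split {n m : ℕ} (A : Finset (Fin n)) (F : (Fin n → Fin m) → ℝ) :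
    ∑ κ, F κ = ∑ τ : {i // i ∈ A} → Fin m, ∑ θ : {i // i ∈ Aᶜ} → Fin m,
      F (combineMono A τ θ) := by
  rw [← (splitEquiv A).sum_comp F, Fintype.sum_prod_type]
  rfl

lemma level_bound {X : Type*} [Fintype X] (c u : X → ℝ) (hu0 : ∀ x, 0 ≤ u x)
    (α : ℝ) (hα : 0 ≤ α) (huα : ∀ x, u x ≤ α) :
    ∃ R : Finset X, |∑ x, u x * c x| ≤ α * |∑ x ∈ R, c x| := by
  classical
  set P := univ.filter (fun x => 0 ≤ c x) with hP
  set N := univ.filter (fun x => ¬ 0 ≤ c x) with hN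
  have hsplit : ∑ x, u x * c x = ∑ x ∈ P, u x * c x + ∑ x ∈ N, u x * c x :=
    (Finset.sum_filter_add_sum_filter_not univ _ _).symm
  have hupper : ∑ x, u x * c x ≤ α * ∑ x ∈ P, c x := by
    rw [hsplit, Finset.mul_sum]
    have h1 : ∑ x ∈ P, u x * c x ≤ ∑ x ∈ P, α * c x :=
      Finset.sum_le_sum fun x hx =>
        mul_le_mul_of_nonneg_right (huα x) (Finset.mem_filter.mp hx).2
    have h2 : ∑ x ∈ N, u x * c x ≤ 0 :=
      Finset.sum_nonpos fun x hx =>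
        mul_nonpos_of_nonneg_of_nonpos (hu0 x)
          (le_of_not_ge (Finset.mem_filter.mp hx).2)
    linarith
  have hlower : α * ∑ x ∈ N, c x ≤ ∑ x, u x * c x := by
    rw [hsplit, Finset.mul_sum]
    have h1 : (0:ℝ) ≤ ∑ x ∈ P, u x * c x :=
      Finset.sum_nonneg fun x hx => mul_nonneg (hu0 x) (Finset.mem_filter.mp hx).2
    have h2 : ∑ x ∈ N, α * c x ≤ ∑ x ∈ N, u x * c x :=
      Finset.sum_le_sum fun x hx => by
        have hc : c x ≤ 0 := le_of_not_ge (Finset.mem_filter.mp hx).2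
        nlinarith [huα x, hu0 x]
    linarith
  rcases le_or_gt 0 (∑ x, u x * c x) with h | h
  · refine ⟨P, ?_⟩
    rw [abs_of_nonneg h]
    exact hupper.trans (mul_le_mul_of_nonneg_left (le_abs_self _) hα)
  · refine ⟨N, ?_⟩
    rw [abs_of_neg h]
    have : -(α * ∑ x ∈ N, c x) ≤ α * |∑ x ∈ N, c x| := by
      rw [← mul_neg]
      exact mul_le_mul_of_nonneg_left (neg_le_abs _) hα
    linarith

lemma rect_bound {X Y : Type*} [Fintype X] [Fintype Y]
    (S : X → Y → ℝ) (γ : ℝ) (hγ0 : 0 ≤ γ)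
    (hS : ∀ (R₁ : Finset X) (R₂ : Finset Y), |∑ x ∈ R₁, ∑ y ∈ R₂, S x y| ≤ γ)
    (u : X → ℝ) (v : Y → ℝ) (hu : ∀ x, 0 ≤ u x) (hv : ∀ y, 0 ≤ v y)
    (huv : ∀ x y, u x * v y ≤ 1) :
    |∑ x, ∑ y, u x * (v y * S x y)| ≤ γ := by
  classical
  cases isEmpty_or_nonempty X with
  | inl hX => simp [hγ0]
  | inr hX =>
  cases isEmpty_or_nonempty Y with
  | inl hY => simp [hγ0]
  | inr hY =>
  obtain ⟨x₀, -, hx₀⟩ := Finset.exists_max_image (univ : Finset X) u univ_nonempty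
  obtain ⟨y₀, -, hy₀⟩ := Finset.exists_max_image (univ : Finset Y) v univ_nonempty
  set α := u x₀ with hαdef
  set β := v y₀ with hβdef
  have hα0 : 0 ≤ α := hu x₀
  have hβ0 : 0 ≤ β := hv y₀
  have hαβ : α * β ≤ 1 := huv x₀ y₀
  -- first application
  obtain ⟨R₁, hR₁⟩ := level_bound (fun x => ∑ y, v y * S x y) u hu α hα0
    (fun x => hx₀ x (mem_univ x))
  have hswap : ∑ x ∈ R₁, ∑ y, v y * S x y = ∑ y, v y * ∑ x ∈ R₁, S x y := by
    rw [Finset.sum_comm]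
    exact Finset.sum_congr rfl fun y _ => by rw [Finset.mul_sum]
  obtain ⟨R₂, hR₂⟩ := level_bound (fun y => ∑ x ∈ R₁, S x y) v hv β hβ0
    (fun y => hy₀ y (mem_univ y))
  have hγ2 : |∑ y ∈ R₂, ∑ x ∈ R₁, S x y| ≤ γ := by
    rw [Finset.sum_comm]; exact hS R₁ R₂
  have hmul : ∑ x, ∑ y, u x * (v y * S x y)
      = ∑ x, u x * ∑ y, v y * S x y := by
    exact Finset.sum_congr rfl fun x _ => by rw [Finset.mul_sum]
  calc |∑ x, ∑ y, u x * (v y * S x y)|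
      = |∑ x, u x * ∑ y, v y * S x y| := by rw [hmul]
    _ ≤ α * |∑ x ∈ R₁, ∑ y, v y * S x y| := hR₁
    _ = α * |∑ y, v y * ∑ x ∈ R₁, S x y| := by rw [hswap]
    _ ≤ α * (β * |∑ y ∈ R₂, ∑ x ∈ R₁, S x y|) :=
        mul_le_mul_of_nonneg_left hR₂ hα0
    _ ≤ α * (β * γ) := by
        exact mul_le_mul_of_nonneg_left (mul_le_mul_of_nonneg_left hγ2 hβ0) hα0
    _ = (α * β) * γ := by ring
    _ ≤ 1 * γ := mul_le_mul_of_nonneg_right hαβ hγ0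
    _ = γ := one_mul γ

set_option maxHeartbeats 2000000 in
/-- **Discrepancy–sensitivity correspondence.** If `g = F_{n,m} − ε·f` (so the coefficient
of `κ` in `g` is `1 − ε·fc κ`) is written as `Σ_{t=1}^s a_t·b_t` with each `a_t·b_t` a
nearly-balanced ordered product polynomial with `a_t·b_t ≤ g` coefficient-wise, and `γ`
bounds the discrepancy of `C^f` under `Δ` over all nearly-balanced partitions and
rectangles, and `ε ≥ 6γ/(1−3γ)`, then `s ≥ ε/(3γ)`. -/
theorem sensitivity_lower_bound (n m : ℕ) (hn : 2 ≤ n)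
    (Δ : (Fin n → Fin m) → ℝ) (hΔ0 : ∀ κ, 0 ≤ Δ κ) (hΔ1 : ∑ κ, Δ κ = 1)
    (fc : (Fin n → Fin m) → ℝ) (hf : ∀ κ, fc κ = 0 ∨ fc κ = 1)
    (γ : ℝ) (hγpos : 0 < γ) (hγlt : 3 * γ < 1)
    (hγ : ∀ (B : Finset (Fin n)), n ≤ 3 * B.card → 3 * B.card ≤ 2 * n →
      ∀ (R₁ : Finset ({i // i ∈ B} → Fin m)) (R₂ : Finset ({i // i ∈ Bᶜ} → Fin m)),
        |∑ τ ∈ R₁, ∑ θ ∈ R₂, signedM Δ fc (combineMono B τ θ)| ≤ γ)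
    (ε : ℝ) (hε : 6 * γ / (1 - 3 * γ) ≤ ε)
    (s : ℕ)
    (A : Fin s → Finset (Fin n))
    (hA1 : ∀ t, n ≤ 3 * (A t).card) (hA2 : ∀ t, 3 * (A t).card ≤ 2 * n)
    (a : (t : Fin s) → ({i // i ∈ A t} → Fin m) → ℝ)
    (b : (t : Fin s) → ({i // i ∈ (A t)ᶜ} → Fin m) → ℝ)
    (ha : ∀ t τ, 0 ≤ a t τ) (hb : ∀ t θ, 0 ≤ b t θ)
    (hle : ∀ t (κ : Fin n → Fin m),
      a t (fun i => κ i.1) * b t (fun i => κ i.1) ≤ 1 - ε * fc κ)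
    (hdecomp : ∀ κ : Fin n → Fin m,
      1 - ε * fc κ = ∑ t, a t (fun i => κ i.1) * b t (fun i => κ i.1)) :
    ε / (3 * γ) ≤ (s : ℝ) := by
  classical
  have h13 : 0 < 1 - 3 * γ := by linarith
  have hεpos : 0 < ε := lt_of_lt_of_le (by positivity) hε
  have hε6 : 6 * γ ≤ ε * (1 - 3 * γ) := (div_le_iff₀ h13).mp hε
  -- choose a balanced B
  have hk : (n + 2) / 3 ≤ n ∧ n ≤ 3 * ((n + 2) / 3) ∧ 3 * ((n + 2) / 3) ≤ 2 * n := by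
    have h1 := Nat.div_add_mod (n + 2) 3
    have h2 : (n + 2) % 3 < 3 := Nat.mod_lt _ (by norm_num)
    omega
  obtain ⟨B, -, hBcard⟩ := Finset.exists_subset_card_eq
    (show (n + 2) / 3 ≤ (univ : Finset (Fin n)).card by simpa using hk.1)
  have hB1 : n ≤ 3 * B.card := by rw [hBcard]; exact hk.2.1
  have hB2 : 3 * B.card ≤ 2 * n := by rw [hBcard]; exact hk.2.2
  -- bound on total signed mass
  have hD : |∑ κ, signedM Δ fc κ| ≤ γ := by
    rw [sum_split B]
    simpa using hγ B hB1 hB2 univ univ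
  -- p = measure of f = 1
  set p := ∑ κ, Δ κ * fc κ with hpdef
  have hDp : ∑ κ, signedM Δ fc κ = 2 * p - 1 := by
    have hterm : ∀ κ, signedM Δ fc κ = 2 * (Δ κ * fc κ) - Δ κ := by
      intro κ
      rcases hf κ with h | h <;> simp [signedM, h] <;> ring
    rw [Finset.sum_congr rfl fun κ _ => hterm κ, Finset.sum_sub_distrib, hΔ1,
      ← Finset.mul_sum]
  have hp1 : p ≤ 1 := by
    rw [hpdef, ← hΔ1]
    refine Finset.sum_le_sum fun κ _ => ?_
    rcases hf κ with h | h <;> simp [h]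
    exact hΔ0 κ
  have hp0 : (1 - γ) / 2 ≤ p := by
    rw [hDp] at hD
    have := abs_le.mp hD
    linarith [this.1]
  -- value of M on g
  set Mg := ∑ κ, signedM Δ fc κ * (1 - ε * fc κ) with hMgdef
  have hMg : Mg = (2 * p - 1) - ε * p := by
    have hterm : ∀ κ, signedM Δ fc κ * (1 - ε * fc κ)
        = signedM Δ fc κ - ε * (Δ κ * fc κ) := by
      intro κ
      rcases hf κ with h | h <;> simp [signedM, h] <;> ring
    rw [hMgdef, Finset.sum_congr rfl fun κ _ => hterm κ, Finset.sum_sub_distrib,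
      hDp, ← Finset.mul_sum, ← hpdef]
  -- decomposition of Mg
  have hMgsum : Mg = ∑ t, ∑ κ, signedM Δ fc κ *
      (a t (fun i => κ i.1) * b t (fun i => κ i.1)) := by
    rw [hMgdef]
    rw [Finset.sum_comm]
    refine Finset.sum_congr rfl fun κ _ => ?_
    rw [← Finset.mul_sum, ← hdecomp]
  -- each term is bounded by γ
  have hterm_bd : ∀ t, |∑ κ, signedM Δ fc κ *
      (a t (fun i => κ i.1) * b t (fun i => κ i.1))| ≤ γ := by
    intro t
    rw [sum_split (A t)]
    have hrw : ∀ (τ : {i // i ∈ A t} → Fin m) (θ : {i // i ∈ (A t)ᶜ} → Fin m),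
        signedM Δ fc (combineMono (A t) τ θ) *
          (a t (fun i => combineMono (A t) τ θ i.1) *
           b t (fun i => combineMono (A t) τ θ i.1))
        = a t τ * (b t θ * signedM Δ fc (combineMono (A t) τ θ)) := by
      intro τ θ
      rw [combineMono_restr1, combineMono_restr2]
      ring
    calc |∑ τ, ∑ θ, signedM Δ fc (combineMono (A t) τ θ) *
          (a t (fun i => combineMono (A t) τ θ i.1) *
           b t (fun i => combineMono (A t) τ θ i.1))|
        = |∑ τ, ∑ θ, a t τ * (b t θ * signedM Δ fc (combineMono (A t) τ θ))| := by
          congr 1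
          exact Finset.sum_congr rfl fun τ _ => Finset.sum_congr rfl fun θ _ => hrw τ θ
      _ ≤ γ := by
          refine rect_bound _ γ hγpos.le (hγ (A t) (hA1 t) (hA2 t)) (a t) (b t)
            (ha t) (hb t) fun τ θ => ?_
          have := hle t (combineMono (A t) τ θ)
          rw [combineMono_restr1, combineMono_restr2] at this
          have hfnn : 0 ≤ fc (combineMono (A t) τ θ) := by
            rcases hf (combineMono (A t) τ θ) with h | h <;> rw [h] <;> norm_num
          nlinarith
  -- combine
  have habs : |Mg| ≤ (s : ℝ) * γ := by
    rw [hMgsum]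
    calc |∑ t, ∑ κ, signedM Δ fc κ *
          (a t (fun i => κ i.1) * b t (fun i => κ i.1))|
        ≤ ∑ t, |∑ κ, signedM Δ fc κ *
          (a t (fun i => κ i.1) * b t (fun i => κ i.1))| :=
          Finset.abs_sum_le_sum_abs _ _
      _ ≤ ∑ _t : Fin s, γ := Finset.sum_le_sum fun t _ => hterm_bd t
      _ = (s : ℝ) * γ := by simp [mul_comm]
  have hlow : ε * ((1 - γ) / 2) - γ ≤ (s : ℝ) * γ := by
    have h1 : -Mg ≤ (s : ℝ) * γ := le_trans (neg_le_abs Mg) habs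
    have h2 : ε * ((1 - γ) / 2) ≤ ε * p := mul_le_mul_of_nonneg_left hp0 hεpos.le
    have h3 : 2 * p - 1 ≤ γ := by
      rw [hDp] at hD; linarith [(abs_le.mp hD).2]
    rw [hMg] at h1
    linarith
  rw [div_le_iff₀ (by positivity : (0:ℝ) < 3 * γ)]
  nlinarith [hlow, hε6, hεpos]
end

section
/- Fix constants. Let π be a uniformly random permutation of [n'] fixing 1, with n' = c·n for a sufficiently large constant c, and fix a partition [n'] = W_A ∪ W_B with |W_A|, |W_B| ≥ n'/3. For each i ∈ [n], say π honours gadget i if π maps the two 'a'-positions of gadget i into W_A and the two 'b'-positions into W_B. Then for appropriately chosen constants α ∈ (0,1) and c, the probability that π honours fewer than αn of the n gadgets is at most 2^{-Ω(n)}. -/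
/-!
The blocks of `π` at the gadget positions, together with `π 0 = 0`, determine `π` on
`{0, …, 4n}`. So each tuple of blocks comes from at most `(m - 4n - 1)!` of the `(m - 1)!`
permutations fixing `0`, and counting permutations costs at most a factor `(m / (m - 4n)) ^ (4n)`
over counting independent uniform tuples of blocks. For those, each block is honoured with
probability `(|W_A| |W_B| / m²)² ≥ (2/9)² = 4/81`, so `2 ^ (number of unhonoured gadgets)` has mean
at most `(158/81) ^ n`, and Markov's inequality bounds the probability of fewer than `αn` honoured
gadgets by `2 ^ (-(1 - α) n) ρ ^ n` with `ρ = (158/81) (c / (c - 4)) ^ 4`. Since `ρ < 2`, choosing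
`α = (1 - log₂ ρ) / 2` makes this `2 ^ (-α n)`.
-/

open Finset Equiv
open scoped Nat

namespace Equiv.Perm
variable {α : Type*} [Fintype α] [DecidableEq α]

theorem card_filter_forall_mem_apply_eq_self (s : Finset α) :
    #{π : Perm α | ∀ a ∈ s, π a = a} = (Fintype.card α - #s)! := by
  rw [← Fintype.card_subtype, ← card_compl, ← Fintype.card_coe, ← Fintype.card_perm]
  refine Fintype.card_congr ((Perm.subtypeEquivSubtypePerm (· ∈ sᶜ)).trans ?_).symm
  exact Equiv.subtypeEquivRight fun π => by simp

theorem card_filter_forall_mem_apply_eq (s : Finset α) (σ : Perm α) :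
    #{π : Perm α | ∀ a ∈ s, π a = σ a} = (Fintype.card α - #s)! := by
  rw [← card_filter_forall_mem_apply_eq_self s]
  refine card_bij' (fun π _ => σ⁻¹ * π) (fun τ _ => σ * τ) ?_ ?_ ?_ ?_ <;>
    simp +contextual

theorem card_le_factorial_mul_card_of_eqOn {γ : Type*} [DecidableEq γ] {s : Finset α}
    {S : Finset (Perm α)} {T : Finset γ} {f : Perm α → γ} (hST : ∀ π ∈ S, f π ∈ T)
    (hf : ∀ π ∈ S, ∀ σ ∈ S, f π = f σ → ∀ a ∈ s, π a = σ a) :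
    #S ≤ (Fintype.card α - #s)! * #T := by
  refine card_le_mul_card_image_of_maps_to hST _ fun y _ => ?_
  rcases Finset.eq_empty_or_nonempty {π ∈ S | f π = y} with hempty | ⟨σ, hσ⟩
  · simp [hempty]
  rw [← card_filter_forall_mem_apply_eq s σ]
  refine card_le_card fun π hπ => ?_
  simp only [mem_filter, mem_univ, true_and] at hπ hσ ⊢
  exact hf π hπ.1 σ hσ.1 (hπ.2.trans hσ.2.symm)

end Equiv.Perm

theorem sum_pow_card_filter_notMem {ι κ R : Type*} [Fintype ι] [DecidableEq ι] [Fintype κ]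
    [DecidableEq κ] [CommSemiring R] (H : Finset κ) (x : R) :
    ∑ f : ι → κ, x ^ #{i | f i ∉ H} = (#H + x * #Hᶜ) ^ Fintype.card ι := by
  have hweight (f : ι → κ) : x ^ #{i | f i ∉ H} = ∏ i, if f i ∈ H then 1 else x := by
    rw [prod_ite, prod_const_one, one_mul, prod_const]
  have hsum : ∑ v : κ, (if v ∈ H then 1 else x) = #H + x * #Hᶜ := by
    simp [sum_ite, mul_comm, ← compl_filter]
  calc ∑ f : ι → κ, x ^ #{i | f i ∉ H}
      = ∑ f : ι → κ, ∏ i, if f i ∈ H then 1 else x := sum_congr rfl fun f _ => hweight f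
    _ = ∏ _i : ι, ∑ v : κ, if v ∈ H then 1 else x :=
        (Fintype.prod_sum fun (_ : ι) (v : κ) => if v ∈ H then (1 : R) else x).symm
    _ = (#H + x * #Hᶜ) ^ Fintype.card ι := by rw [hsum, prod_const, card_univ]

theorem rpow_mul_card_filter_le_of_many_notMem {ι κ : Type*} [Fintype ι] [DecidableEq ι]
    [Fintype κ] [DecidableEq κ] (H : Finset κ) {x : ℝ} (hx : 1 ≤ x) (t : ℝ) :
    x ^ t * #{f : ι → κ | t ≤ #{i | f i ∉ H}} ≤ (#H + x * #Hᶜ) ^ Fintype.card ι := by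
  rw [← sum_pow_card_filter_notMem, mul_comm, ← nsmul_eq_mul]
  calc #{f : ι → κ | t ≤ #{i | f i ∉ H}} • x ^ t
      ≤ ∑ f ∈ {f : ι → κ | t ≤ #{i | f i ∉ H}}, x ^ #{i | f i ∉ H} :=
        card_nsmul_le_sum _ _ _ fun f hf => by
          rw [← Real.rpow_natCast]
          exact Real.rpow_le_rpow_of_exponent_le hx (mem_filter.mp hf).2
    _ ≤ ∑ f : ι → κ, x ^ #{i | f i ∉ H} :=
        sum_le_sum_of_subset_of_nonneg (subset_univ _) fun _ _ _ => by positivity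

theorem Nat.factorial_sub_succ_mul_pow_le {k m : ℕ} (h : k < m) :
    (m - (k + 1))! * (m - k) ^ k ≤ (m - 1)! := by
  have := Nat.factorial_mul_pow_le_factorial (m := m - (k + 1)) (n := k)
  rwa [show m - (k + 1) + 1 = m - k by omega, show m - (k + 1) + k = m - 1 by omega] at this

theorem exists_inv_two_rpow_mul_pow_eq_two_rpow {ρ : ℝ} (hρ₀ : 1 / 2 < ρ) (hρ₂ : ρ < 2) :
    ∃ α : ℝ, 0 < α ∧ α < 1 ∧ ∀ n : ℕ, (2 ^ ((1 - α) * n))⁻¹ * ρ ^ n = (2 : ℝ) ^ (-(α * n)) := by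
  have hlog_lt : Real.logb 2 ρ < 1 := by
    rwa [Real.logb_lt_iff_lt_rpow one_lt_two (by linarith), Real.rpow_one]
  have hlog_gt : -1 < Real.logb 2 ρ := by
    rwa [Real.lt_logb_iff_rpow_lt one_lt_two (by linarith), Real.rpow_neg_one, ← one_div]
  refine ⟨(1 - Real.logb 2 ρ) / 2, by linarith, by linarith, fun n => ?_⟩
  nth_rw 2 [← Real.rpow_logb two_pos one_lt_two.ne' (by linarith : 0 < ρ)]
  rw [← Real.rpow_natCast, ← Real.rpow_mul two_pos.le, ← Real.rpow_neg two_pos.le,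
    ← Real.rpow_add two_pos]
  ring_nf

section Gadgets

variable {n m : ℕ}

def gadgetBlock (h : 4 * n < m) (π : Perm (Fin m)) (i : Fin n) (j : Fin 4) : Fin m :=
  π ⟨4 * i + j + 1, by omega⟩

def gadgetPattern {α : Type*} [Fintype α] [DecidableEq α] (W : Finset α) : Finset (Fin 4 → α) :=
  Fintype.piFinset ![W, W, Wᶜ, Wᶜ]

theorem gadgetBlock_mem_gadgetPattern_iff (h : 4 * n < m) (π : Perm (Fin m)) (i : Fin n)
    (W : Finset (Fin m)) :
    gadgetBlock h π i ∈ gadgetPattern W ↔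
      π ⟨4 * i + 1, by omega⟩ ∈ W ∧ π ⟨4 * i + 2, by omega⟩ ∈ W ∧
        π ⟨4 * i + 3, by omega⟩ ∈ Wᶜ ∧ π ⟨4 * i + 4, by omega⟩ ∈ Wᶜ := by
  simp [gadgetPattern, gadgetBlock, Fin.forall_fin_succ]

theorem card_gadgetPattern {α : Type*} [Fintype α] [DecidableEq α] (W : Finset α) :
    #(gadgetPattern W) = (#W * #Wᶜ) ^ 2 := by
  simp only [gadgetPattern, Fintype.card_piFinset, Fin.prod_univ_four, Fin.isValue,
    Matrix.cons_val_zero, Matrix.cons_val_one, Matrix.cons_val]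
  ring

theorem card_gadgetPattern_add_two_mul_card_compl_le {α : Type*} [Fintype α] [DecidableEq α]
    {W : Finset α} (hW : Fintype.card α ≤ 3 * #W) (hWc : Fintype.card α ≤ 3 * #Wᶜ) :
    (#(gadgetPattern W) : ℝ) + 2 * #(gadgetPattern W)ᶜ ≤ 158 / 81 * Fintype.card α ^ 4 := by
  have hsum : #W + #Wᶜ = Fintype.card α := card_add_card_compl W
  have hprod : 2 * (Fintype.card α : ℝ) ^ 2 ≤ 9 * (#W * #Wᶜ) := by
    have hW' : (Fintype.card α : ℝ) ≤ 3 * #W := by exact_mod_cast hW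
    have hWc' : (Fintype.card α : ℝ) ≤ 3 * #Wᶜ := by exact_mod_cast hWc
    have hsum' : (#W : ℝ) + #Wᶜ = Fintype.card α := by exact_mod_cast hsum
    nlinarith [mul_nonneg (sub_nonneg.mpr hW') (sub_nonneg.mpr hWc')]
  have hcompl : (#(gadgetPattern W)ᶜ : ℝ) = Fintype.card α ^ 4 - #(gadgetPattern W) := by
    rw [card_compl, Nat.cast_sub (card_le_univ _)]
    simp
  rw [hcompl, card_gadgetPattern]
  push_cast
  nlinarith [hprod, sq_nonneg ((Fintype.card α : ℝ) ^ 2)]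

theorem apply_eq_of_gadgetBlock_eq (h : 4 * n < m) {π σ : Perm (Fin m)}
    (hπ : π ⟨0, by omega⟩ = ⟨0, by omega⟩) (hσ : σ ⟨0, by omega⟩ = ⟨0, by omega⟩)
    (hblock : gadgetBlock h π = gadgetBlock h σ) :
    ∀ a ∈ Iic (⟨4 * n, by omega⟩ : Fin m), π a = σ a := by
  intro a ha
  have ha : (a : ℕ) ≤ 4 * n := Fin.le_def.mp (mem_Iic.mp ha)
  rcases Nat.eq_zero_or_pos a with ha0 | ha0
  · rw [show a = ⟨0, by omega⟩ from Fin.ext ha0, hπ, hσ]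
  · have hj := congrFun (congrFun hblock ⟨(a - 1) / 4, by omega⟩) ⟨(a - 1) % 4, by omega⟩
    have ha' : a = ⟨4 * ((a - 1) / 4) + (a - 1) % 4 + 1, by omega⟩ :=
      Fin.ext (by dsimp only; omega)
    rwa [ha']

theorem card_filter_gadgetBlock_le (h : 4 * n < m) (P : (Fin n → Fin 4 → Fin m) → Prop)
    [DecidablePred P] :
    #{π : Perm (Fin m) | π ⟨0, by omega⟩ = ⟨0, by omega⟩ ∧ P (gadgetBlock h π)}
      ≤ (m - (4 * n + 1))! * #{f | P f} := by
  have := Perm.card_le_factorial_mul_card_of_eqOn (s := Iic (⟨4 * n, by omega⟩ : Fin m))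
    (S := {π : Perm (Fin m) | π ⟨0, by omega⟩ = ⟨0, by omega⟩ ∧ P (gadgetBlock h π)})
    (T := {f | P f}) (f := gadgetBlock h) (by simp +contextual)
    (fun π hπ σ hσ => apply_eq_of_gadgetBlock_eq h (mem_filter.mp hπ).2.1 (mem_filter.mp hσ).2.1)
  simpa using this

theorem card_filter_apply_zero_eq_zero (h : 0 < m) :
    #{π : Perm (Fin m) | π ⟨0, h⟩ = ⟨0, h⟩} = (m - 1)! := by
  simpa using Perm.card_filter_forall_mem_apply_eq_self {(⟨0, h⟩ : Fin m)}

theorem card_filter_many_unhonoured_le (h : 4 * n < m) {W : Finset (Fin m)}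
    (hW : m ≤ 3 * #W) (hWc : m ≤ 3 * #Wᶜ) (t : ℝ) :
    (#{π : Perm (Fin m) | π ⟨0, by omega⟩ = ⟨0, by omega⟩ ∧
        t ≤ #{i | gadgetBlock h π i ∉ gadgetPattern W}} : ℝ)
      ≤ (2 ^ t)⁻¹ * (158 / 81 * (m / (m - 4 * n)) ^ 4) ^ n *
          #{π : Perm (Fin m) | π ⟨0, by omega⟩ = ⟨0, by omega⟩} := by
  set F : ℕ := (m - (4 * n + 1))!
  set K : ℕ := #{f : Fin n → Fin 4 → Fin m | t ≤ #{i | f i ∉ gadgetPattern W}}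
  have hnum := card_filter_gadgetBlock_le h (fun f => t ≤ #{i | f i ∉ gadgetPattern W})
  have hK : 2 ^ t * (K : ℝ) ≤ (158 / 81 * m ^ 4) ^ n := by
    have hdens := card_gadgetPattern_add_two_mul_card_compl_le (W := W)
      (by simpa using hW) (by simpa using hWc)
    have := rpow_mul_card_filter_le_of_many_notMem (ι := Fin n) (gadgetPattern W) one_le_two t
    simp only [Fintype.card_fin] at this hdens
    exact this.trans (pow_le_pow_left₀ (by positivity) hdens n)
  have hden : (F : ℝ) * (m - 4 * n) ^ (4 * n) ≤ (m - 1)! := by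
    rw [← Nat.cast_ofNat, ← Nat.cast_mul, ← Nat.cast_sub h.le]
    exact_mod_cast Nat.factorial_sub_succ_mul_pow_le h
  have hgap : (0 : ℝ) < m - 4 * n := by
    rw [sub_pos]
    exact_mod_cast h
  rw [card_filter_apply_zero_eq_zero]
  calc (#{π : Perm (Fin m) | π ⟨0, by omega⟩ = ⟨0, by omega⟩ ∧
        t ≤ #{i | gadgetBlock h π i ∉ gadgetPattern W}} : ℝ)
      ≤ F * K := by exact_mod_cast hnum
    _ ≤ F * ((2 ^ t)⁻¹ * (158 / 81 * m ^ 4) ^ n) := by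
        gcongr
        exact (le_inv_mul_iff₀ (by positivity)).mpr hK
    _ = (2 ^ t)⁻¹ * (158 / 81 * (m / (m - 4 * n)) ^ 4) ^ n * (F * (m - 4 * n) ^ (4 * n)) := by
        rw [mul_pow, mul_pow, ← pow_mul, ← pow_mul, div_pow (m : ℝ)]
        field_simp
    _ ≤ (2 ^ t)⁻¹ * (158 / 81 * (m / (m - 4 * n)) ^ 4) ^ n * (m - 1)! := by gcongr

theorem card_filter_few_honoured_le (h : 4 * n < m) {W : Finset (Fin m)}
    (hW : m ≤ 3 * #W) (hWc : m ≤ 3 * #Wᶜ) (α : ℝ) :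
    (#{π : Perm (Fin m) | π ⟨0, by omega⟩ = ⟨0, by omega⟩ ∧
        (#{i | gadgetBlock h π i ∈ gadgetPattern W} : ℝ) < α * n} : ℝ)
      ≤ (2 ^ ((1 - α) * n))⁻¹ * (158 / 81 * (m / (m - 4 * n)) ^ 4) ^ n *
          #{π : Perm (Fin m) | π ⟨0, by omega⟩ = ⟨0, by omega⟩} := by
  refine le_trans (Nat.cast_le.mpr (card_le_card fun π hπ => ?_))
    (card_filter_many_unhonoured_le h hW hWc _)
  simp only [mem_filter, mem_univ, true_and] at hπ ⊢
  have hsplit : (#{i | gadgetBlock h π i ∈ gadgetPattern W} : ℝ)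
      + #{i | gadgetBlock h π i ∉ gadgetPattern W} = n := by
    exact_mod_cast (card_filter_add_card_filter_not _).trans (card_fin n)
  exact ⟨hπ.1, by linarith [hπ.2]⟩

end Gadgets

open scoped Classical in
/-- **Most permutations honour many gadgets.** Let `π` be a uniformly random permutation of
`[n'] = [c·n]` fixing the root position `0`, and fix a nearly-balanced partition
`W_A ∪ W_B` of the vertices (`|W_A|, |W_B| ≥ n'/3`). Gadget `i` occupies the `a`-positions
`4i+1, 4i+2` and `b`-positions `4i+3, 4i+4`; `π` honours gadget `i` if it maps the
`a`-positions into `W_A` and the `b`-positions into `W_B`. Then for appropriately chosen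
constants `α ∈ (0,1)` and `c`, the probability that `π` honours fewer than `αn` of the `n`
gadgets is at most `2^{−Ω(n)}`. -/
theorem random_permutation_honours_many_gadgets :
    ∃ α : ℝ, 0 < α ∧ α < 1 ∧
    ∃ c : ℕ, ∃ _hc : 5 ≤ c,
    ∃ δ : ℝ, 0 < δ ∧
    ∃ N : ℕ, ∃ _hN : 1 ≤ N,
    ∀ n : ℕ, ∀ _hn : N ≤ n,
    ∀ WA : Finset (Fin (c * n)),
      c * n ≤ 3 * WA.card → c * n ≤ 3 * WAᶜ.card →
      ((Finset.univ.filter (fun π : Equiv.Perm (Fin (c * n)) =>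
          π ⟨0, by exact Nat.mul_pos (by omega) (by omega)⟩
            = ⟨0, by exact Nat.mul_pos (by omega) (by omega)⟩ ∧
          ((Finset.univ.filter (fun i : Fin n =>
              π ⟨4 * i.1 + 1, by have h := i.isLt; have := Nat.mul_le_mul_right n _hc; omega⟩ ∈ WA ∧
              π ⟨4 * i.1 + 2, by have h := i.isLt; have := Nat.mul_le_mul_right n _hc; omega⟩ ∈ WA ∧
              π ⟨4 * i.1 + 3, by have h := i.isLt; have := Nat.mul_le_mul_right n _hc; omega⟩ ∈ WAᶜ ∧
              π ⟨4 * i.1 + 4, by have h := i.isLt; have := Nat.mul_le_mul_right n _hc; omega⟩ ∈ WAᶜ)).card : ℝ)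
            < α * n)).card : ℝ)
        / ((Finset.univ.filter (fun π : Equiv.Perm (Fin (c * n)) =>
            π ⟨0, by exact Nat.mul_pos (by omega) (by omega)⟩
              = ⟨0, by exact Nat.mul_pos (by omega) (by omega)⟩)).card : ℝ)
      ≤ (2 : ℝ) ^ (-(δ * n)) := by
  obtain ⟨α, hα0, hα1, hexp⟩ :=
    exists_inv_two_rpow_mul_pow_eq_two_rpow (ρ := 158 / 81 * (10000 / 9996) ^ 4)
      (by norm_num) (by norm_num)
  refine ⟨α, hα0, hα1, 10000, by norm_num, α, hα0, 1, le_rfl, fun n hn WA hWA hWB => ?_⟩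
  have h : 4 * n < 10000 * n := by omega
  have hratio : ((10000 * n : ℕ) : ℝ) / ((10000 * n : ℕ) - 4 * n) = 10000 / 9996 := by
    have : (n : ℝ) ≠ 0 := by positivity
    push_cast
    field_simp
    ring
  have hbad := card_filter_few_honoured_le h hWA hWB α
  simp only [gadgetBlock_mem_gadgetPattern_iff] at hbad
  rw [hratio, hexp] at hbad
  rw [div_le_iff₀ (by exact_mod_cast card_pos.mpr ⟨1, by simp⟩)]
  -- `convert` reconciles the classical decidability instances of the statement's filters
  convert hbad
end

section
/- If a_s·b_s is a nearly-balanced ordered product of monotone polynomials with a_s·b_s ≤ ST_n(G̃) coefficientwise, then for every i ∈ I(a_s) and j ∈ I(b_s), it is not the case that both variables x_{i,j} and x_{j,i} appear in a_s·b_s; equivalently, for each undirected crossing edge {i,j} of G between I(a_s) and I(b_s), at most one of the two oriented-edge variables occurs among the variables of a_s and b_s. -/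
open Finset

/-- Extend a map `ν : {2,…,n} → [n]` (here: nonzero indices of `Fin (n+1)`) to all of
`Fin (n+1)` by sending the root `0` to itself. -/
def extendMap {n : ℕ} (ν : {i : Fin (n + 1) // i ≠ 0} → Fin (n + 1)) :
    Fin (n + 1) → Fin (n + 1) :=
  fun i => if h : i = 0 then 0 else ν ⟨i, h⟩

/-- `ν` describes a directed spanning tree of `G̃` rooted at vertex `0`. -/
def isSpanTreeMap {n : ℕ} (G : SimpleGraph (Fin (n + 1)))
    (ν : {i : Fin (n + 1) // i ≠ 0} → Fin (n + 1)) : Prop :=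
  (∀ i, G.Adj i.1 (ν i)) ∧ ∀ i : Fin (n + 1), ∃ k : ℕ, (extendMap ν)^[k] i = 0

open scoped Classical in
/-- The coefficient of the monomial `∏ x_{i, ν i}` in the spanning tree polynomial
`ST(G̃)`. -/
noncomputable def STcoef {n : ℕ} (G : SimpleGraph (Fin (n + 1)))
    (ν : {i : Fin (n + 1) // i ≠ 0} → Fin (n + 1)) : ℝ :=
  if isSpanTreeMap G ν then 1 else 0

/-- **No crossing 2-cycles.** If `a·b` is a nearly-balanced ordered product of monotone
polynomials with `a·b ≤ ST(G̃)` coefficient-wise, then for every `i ∈ I(a)` and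
`j ∈ I(b)`, it is not the case that the variable `x_{i,j}` appears in `a` and the
variable `x_{j,i}` appears in `b`. -/
theorem no_crossing_two_cycle (n : ℕ) (G : SimpleGraph (Fin (n + 1)))
    (A : Finset {i : Fin (n + 1) // i ≠ 0})
    (hA1 : n ≤ 3 * A.card) (hA2 : 3 * A.card ≤ 2 * n)
    (a : ({i // i ∈ A} → Fin (n + 1)) → ℝ)
    (b : ({i // i ∈ Aᶜ} → Fin (n + 1)) → ℝ)
    (ha : ∀ τ, 0 ≤ a τ) (hb : ∀ θ, 0 ≤ b θ)
    (hle : ∀ ν : {i : Fin (n + 1) // i ≠ 0} → Fin (n + 1),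
      a (fun i => ν i.1) * b (fun i => ν i.1) ≤ STcoef G ν)
    (i j : {v : Fin (n + 1) // v ≠ 0}) (hi : i ∈ A) (hj : j ∈ Aᶜ) :
    ¬ ((∃ τ, a τ ≠ 0 ∧ τ ⟨i, hi⟩ = j.1) ∧ (∃ θ, b θ ≠ 0 ∧ θ ⟨j, hj⟩ = i.1)) := by
  rintro ⟨⟨τ, hτ, hτij⟩, ⟨θ, hθ, hθji⟩⟩
  classical
  set ν : {v : Fin (n + 1) // v ≠ 0} → Fin (n + 1) :=
    fun v => if h : v ∈ A then τ ⟨v, h⟩ else θ ⟨v, by simpa using h⟩ with hν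
  have hrest_a : (fun x : {i // i ∈ A} => ν x.1) = τ := by
    funext x
    simp [hν, x.2]
  have hrest_b : (fun x : {i // i ∈ Aᶜ} => ν x.1) = θ := by
    funext x
    have hx : x.1 ∉ A := Finset.mem_compl.mp x.2
    simp [hν, hx]
  have hpos : 0 < a (fun x => ν x.1) * b (fun x => ν x.1) := by
    rw [hrest_a, hrest_b]
    exact mul_pos ((ha τ).lt_of_ne (Ne.symm hτ)) ((hb θ).lt_of_ne (Ne.symm hθ))
  have hle' := hle ν
  have hST : STcoef G ν ≠ 0 := by
    intro h0
    rw [h0] at hle'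
    exact absurd hle' (not_le.mpr hpos)
  have hSTM : isSpanTreeMap G ν := by
    by_contra h
    exact hST (by simp [STcoef, h])
  have hνi : ν i = j.1 := by simp [hν, hi, hτij]
  have hνj : ν j = i.1 := by
    have : (j : {v : Fin (n + 1) // v ≠ 0}) ∉ A := by simpa using hj
    simp [hν, this, hθji]
  -- iterates of extendMap ν starting at i stay in {i.1, j.1}
  have key : ∀ k, (extendMap ν)^[k] i.1 = i.1 ∨ (extendMap ν)^[k] i.1 = j.1 := by
    intro k
    induction k with
    | zero => exact Or.inl rfl
    | succ k ih =>
      rw [Function.iterate_succ_apply']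
      rcases ih with h | h
      · rw [h]
        right
        simp only [extendMap, dif_neg i.2]
        simpa using hνi
      · rw [h]
        left
        simp only [extendMap, dif_neg j.2]
        simpa using hνj
  obtain ⟨k, hk⟩ := hSTM.2 i.1
  rcases key k with h | h
  · exact i.2 (h ▸ hk)
  · exact j.2 (h ▸ hk)
end
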